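/- Assuming a well-ordering of ℝ, there exists a subset A of ℝ that is algebraically independent over ℚ and has full outer Lebesgue measure (its complement has inner Lebesgue measure zero); consequently A has Hausdorff dimension 1. -/

import Mathlib

open MeasureTheory

/-! Enumerate the closed sets of positive Lebesgue measure along the initial ordinal of `𝔠`
(there are at most `𝔠` of them) and choose, by transfinite recursion, a point of each that is
transcendental over the ring generated by the fewer than `𝔠` points chosen before it: an
uncountable closed set has `𝔠` points, while fewer than `𝔠` reals are algebraic over a ring of
size `< 𝔠`. The chosen points are algebraically independent and meet every closed set of positive
measure, so by inner regularity they have full, in particular positive, Lebesgue measure, which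
forces Hausdorff dimension `1`. -/

open Cardinal Set

universe u

section Algebraic

variable {R A : Type u} [CommRing R] [CommRing A] [Algebra R A]

theorem mk_setOf_isAlgebraic_adjoin_le [IsDomain A] (S : Set A) :
    #{x : A | IsAlgebraic (Algebra.adjoin R S) x} ≤ #R ⊔ #S ⊔ ℵ₀ :=
  calc #{x : A | IsAlgebraic (Algebra.adjoin R S) x} ≤ #(Algebra.adjoin R S) ⊔ ℵ₀ :=
        Algebraic.cardinalMk_le_max _ A
    _ ≤ #R ⊔ #S ⊔ ℵ₀ := by
        simpa using max_le_max_right ℵ₀ (Algebra.cardinalMk_adjoin_le R S)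

theorem exists_mem_algebraicIndepOn_insert [IsDomain A] {κ : Cardinal} (hκ : ℵ₀ < κ)
    (hR : #R < κ) {S G : Set A} (hS : #S < κ) (hG : κ ≤ #G) (hind : AlgebraicIndepOn R id S) :
    ∃ x ∈ G, AlgebraicIndepOn R id (insert x S) := by
  have hsmall : #{x : A | IsAlgebraic (Algebra.adjoin R S) x} < κ :=
    (mk_setOf_isAlgebraic_adjoin_le S).trans_lt (max_lt (max_lt hR hS) hκ)
  obtain ⟨x, hxG, hx⟩ := not_subset.1 fun h => hG.not_gt ((mk_le_mk_of_subset h).trans_lt hsmall)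
  exact ⟨x, hxG, hind.insert (by rwa [image_id])⟩

theorem algebraicIndepOn_sUnion_of_isChain {K : Type*} [Field K] [Nontrivial A] [Algebra K A]
    {𝒮 : Set (Set A)} (hc : IsChain (· ⊆ ·) 𝒮) (h : ∀ S ∈ 𝒮, AlgebraicIndepOn K id S) :
    AlgebraicIndepOn K id (⋃₀ 𝒮) := by
  rcases 𝒮.eq_empty_or_nonempty with rfl | hne
  · simpa [AlgebraicIndepOn] using (algebraicIndependent_empty (K := K) (A := A))
  · exact algebraicIndependent_sUnion_of_directed hne hc.directedOn h

end Algebraic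

section TransfiniteChoice

variable {α ι : Type*} [LinearOrder ι] [WellFoundedLT ι]

/-- When no admissible point exists, `Classical.epsilon` returns an arbitrary one. -/
noncomputable def greedyChoice [Nonempty α] (P : Set α → Prop) (e : ι → Set α) : ι → α :=
  wellFounded_lt.fix fun i g =>
    Classical.epsilon fun x => x ∈ e i ∧ P (insert x (range fun j : Iio i => g j j.2))

theorem greedyChoice_eq [Nonempty α] (P : Set α → Prop) (e : ι → Set α) (i : ι) :
    greedyChoice P e i =
      Classical.epsilon fun x =>
        x ∈ e i ∧ P (insert x (range fun j : Iio i => greedyChoice P e j)) :=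
  wellFounded_lt.fix_eq _ i

theorem exists_forall_mem_and_range_of_isChain [Nonempty α] {P : Set α → Prop}
    (hP : ∀ 𝒮 : Set (Set α), IsChain (· ⊆ ·) 𝒮 → (∀ S ∈ 𝒮, P S) → P (⋃₀ 𝒮))
    (e : ι → Set α)
    (hstep : ∀ i (g : Iio i → α), P (range g) → ∃ x ∈ e i, P (insert x (range g))) :
    ∃ f : ι → α, (∀ i, f i ∈ e i) ∧ P (range f) := by
  set f := greedyChoice P e
  have hunion : ∀ s : Set ι, IsLowerSet s → (∀ j ∈ s, P (f '' Iic j)) → P (f '' s) := by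
    intro s hs hPs
    have hs_eq : s = ⋃ j ∈ s, Iic j :=
      Subset.antisymm (fun j hj => mem_biUnion hj self_mem_Iic)
        (iUnion₂_subset fun _ hj => hs.Iic_subset hj)
    have hmono : Monotone fun j => f '' Iic j := fun j k hjk => image_mono (Iic_subset_Iic.2 hjk)
    rw [hs_eq, image_iUnion₂, ← sUnion_image]
    exact hP _ (hmono.isChain_image (isChain_of_trichotomous s)) (by simpa using hPs)
  have hIic : ∀ i, f i ∈ e i ∧ P (f '' Iic i) := by
    intro i
    induction i using WellFoundedLT.induction with
    | _ i ih =>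
      have hIio : P (range fun j : Iio i => f j) := by
        rw [← image_eq_range]
        exact hunion _ (isLowerSet_Iio i) fun j hj => (ih j hj).2
      rw [← Iio_insert, image_insert_eq, image_eq_range, show f i = _ from greedyChoice_eq P e i]
      exact Classical.epsilon_spec (hstep i _ hIio)
  refine ⟨f, fun i => (hIic i).1, ?_⟩
  rw [← image_univ]
  exact hunion _ isLowerSet_univ fun j _ => (hIic j).2

end TransfiniteChoice

theorem IsClosed.continuum_le_mk_of_not_countable {α : Type u} [TopologicalSpace α]
    [PolishSpace α] {C : Set α} (hC : IsClosed C) (hunc : ¬C.Countable) : 𝔠 ≤ #C := by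
  obtain ⟨f, hfC, -, hf⟩ := hC.exists_nat_bool_injection_of_not_countable hunc
  have := lift_mk_le_lift_mk_of_injective (f := fun x => (⟨f x, hfC (mem_range_self x)⟩ : C))
    fun x y hxy => hf (congrArg Subtype.val hxy)
  simpa using this

open TopologicalSpace MeasurableSpace in
theorem mk_setOf_isClosed_le_continuum {α : Type u} [TopologicalSpace α]
    [SecondCountableTopology α] : #{F : Set α | IsClosed F} ≤ 𝔠 := by
  have hborel := (isBasis_countableBasis α).borel_eq_generateFrom
  calc #{F : Set α | IsClosed F}
      ≤ #{F : Set α | MeasurableSet[generateFrom (countableBasis α)] F} :=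
        mk_le_mk_of_subset fun F hF =>
          hborel ▸ (measurableSet_generateFrom hF.isOpen_compl).of_compl
    _ ≤ 𝔠 := cardinal_measurableSet_le_continuum
        ((countable_countableBasis α).le_aleph0.trans aleph0_le_continuum)

theorem measure_eq_measure_univ_of_forall_isClosed_subset_compl {α : Type*} [TopologicalSpace α]
    [T2Space α] [MeasurableSpace α] {μ : Measure α} [μ.InnerRegular] {A : Set α}
    (hA : ∀ F, IsClosed F → F ⊆ Aᶜ → μ F = 0) : μ A = μ univ := by
  set G := toMeasurable μ A
  have hGc : μ Gᶜ = 0 := by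
    by_contra h
    obtain ⟨K, hKG, hK, hμK⟩ :=
      (measurableSet_toMeasurable μ A).compl.exists_lt_isCompact (pos_iff_ne_zero.2 h)
    exact hμK.ne' (hA K hK.isClosed (hKG.trans (compl_subset_compl.2 (subset_toMeasurable μ A))))
  refine le_antisymm (measure_mono (subset_univ A)) ?_
  calc μ univ ≤ μ G + μ Gᶜ := by rw [← union_compl_self G]; exact measure_union_le _ _
    _ = μ A := by rw [hGc, add_zero, measure_toMeasurable]

theorem Real.dimH_of_volume_ne_zero {s : Set ℝ} (hs : volume s ≠ 0) : dimH s = 1 :=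
  le_antisymm ((dimH_mono (subset_univ s)).trans_eq Real.dimH_univ) <| by
    simpa using le_dimH_of_hausdorffMeasure_ne_zero (d := 1)
      (by rwa [NNReal.coe_one, hausdorffMeasure_real])

/-- There exists a subset `A` of `ℝ`, algebraically independent over `ℚ`, whose complement
has inner Lebesgue measure zero (so `A` has full outer measure), and hence `A` has
Hausdorff dimension `1`. -/
theorem exists_algebraically_independent_full_outer :
    ∃ A : Set ℝ, AlgebraicIndependent ℚ (fun a : A => (a : ℝ)) ∧
      (⨆ (F : Set ℝ) (_ : IsClosed F ∧ F ⊆ Aᶜ), volume F) = 0 ∧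
      dimH A = 1 := by
  obtain ⟨e, he⟩ : ∃ e : (𝔠).ord.ToType → {F : Set ℝ | IsClosed F ∧ volume F ≠ 0},
      Function.Surjective e := by
    refine Function.exists_surjective_iff.2 ⟨⟨fun _ => ⟨Icc 0 1, isClosed_Icc, by simp⟩⟩, ?_⟩
    rw [← le_def, mk_ord_toType]
    exact (mk_le_mk_of_subset fun F hF => hF.1).trans mk_setOf_isClosed_le_continuum
  obtain ⟨f, hfe, hf⟩ := exists_forall_mem_and_range_of_isChain
    (fun _ => algebraicIndepOn_sUnion_of_isChain (K := ℚ)) (fun i => (e i : Set ℝ))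
    fun i g hg => exists_mem_algebraicIndepOn_insert aleph0_lt_continuum
      (by rw [Cardinal.mkRat]; exact aleph0_lt_continuum)
      (mk_range_le.trans_lt (by simpa using mk_Iio_lt i))
      ((e i).2.1.continuum_le_mk_of_not_countable fun h => (e i).2.2 (h.measure_zero _)) hg
  have hnull : ∀ F, IsClosed F → F ⊆ (range f)ᶜ → volume F = 0 := by
    intro F hF hFA
    by_contra h0
    obtain ⟨i, hi⟩ := he ⟨F, hF, h0⟩
    have hfi : f i ∈ F := by simpa [hi] using hfe i
    exact hFA hfi (mem_range_self i)
  refine ⟨range f, hf, ENNReal.iSup_eq_zero.2 fun F => ENNReal.iSup_eq_zero.2 fun hF =>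
    hnull F hF.1 hF.2, Real.dimH_of_volume_ne_zero ?_⟩
  rw [measure_eq_measure_univ_of_forall_isClosed_subset_compl hnull, Real.volume_univ]
  exact ENNReal.top_ne_zero
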